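/- arXiv:2405.12989 — 9 statements merged into one kernel-verified Lean document; each statement's English description precedes it below -/
import Mathlib

section
/- Let a, b, p, q be integers with a, b > 0, and suppose q is a perfect square and p = a^h b^h · t² for some integer t. If y is a rational number satisfying y² · (p/q) = a^h b^h + (a^{2h} + b^{2h})(p/q) + a^h b^h (p/q)², then a^h b^h · (a^h q + b^h p) · (a^h p + b^h q) is a perfect square (as a rational/integer square). -/
/-! Write `A = a^h`, `B = b^h`, `q = s²`, `p = A B t²`. Clearing denominators in the curve
equation at `x = p/q` gives `y² p q = (A q + B p)(A p + B q)`. Since `p q = A B (t s)²`,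
multiplying by `A B` turns the right side into the square `(A B t s y)²`; a rational square that
is an integer is an integer square. (If `q = 0` the quantity is `(A B p)²` outright.) -/

section Field

variable {K : Type*} [Field K]

theorem sq_mul_mul_eq_of_curve {A B p q y : K} (hq : q ≠ 0)
    (hy : y ^ 2 * (p / q) = A * B + (A ^ 2 + B ^ 2) * (p / q) + A * B * (p / q) ^ 2) :
    y ^ 2 * p * q = (A * q + B * p) * (A * p + B * q) := by
  field_simp at hy
  linear_combination hy

theorem isSquare_of_curve {A B s t y : K}
    (hy : y ^ 2 * (A * B * t ^ 2 / s ^ 2) =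
      A * B + (A ^ 2 + B ^ 2) * (A * B * t ^ 2 / s ^ 2) + A * B * (A * B * t ^ 2 / s ^ 2) ^ 2) :
    IsSquare (A * B * (A * s ^ 2 + B * (A * B * t ^ 2)) * (A * (A * B * t ^ 2) + B * s ^ 2)) := by
  rcases eq_or_ne s 0 with rfl | hs
  · exact ⟨A * B * (A * B * t ^ 2), by ring⟩
  · refine ⟨A * B * t * s * y, ?_⟩
    linear_combination (-A * B) * sq_mul_mul_eq_of_curve (pow_ne_zero 2 hs) hy

end Field

theorem stmt_4_general (a b p q : ℤ) (h : ℕ)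
    (hq : ∃ t : ℤ, q = t ^ 2) (hp : ∃ t : ℤ, p = a ^ h * b ^ h * t ^ 2)
    (y : ℚ)
    (hy : y ^ 2 * ((p : ℚ) / (q : ℚ)) =
      (a : ℚ) ^ h * (b : ℚ) ^ h +
      ((a : ℚ) ^ (2 * h) + (b : ℚ) ^ (2 * h)) * ((p : ℚ) / (q : ℚ)) +
      (a : ℚ) ^ h * (b : ℚ) ^ h * ((p : ℚ) / (q : ℚ)) ^ 2) :
    IsSquare (a ^ h * b ^ h * (a ^ h * q + b ^ h * p) * (a ^ h * p + b ^ h * q)) := by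
  obtain ⟨s, rfl⟩ := hq
  obtain ⟨t, rfl⟩ := hp
  rw [← Rat.isSquare_intCast_iff]
  push_cast
  simp only [pow_mul'] at hy
  push_cast at hy
  exact isSquare_of_curve hy

theorem stmt_4 (a b p q : ℤ) (h : ℕ) (ha : 0 < a) (hb : 0 < b) (hh : 0 < h)
    (hq : ∃ t : ℤ, q = t ^ 2) (hp : ∃ t : ℤ, p = a ^ h * b ^ h * t ^ 2)
    (y : ℚ)
    (hy : y ^ 2 * ((p : ℚ) / (q : ℚ)) =
      (a : ℚ) ^ h * (b : ℚ) ^ h +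
      ((a : ℚ) ^ (2 * h) + (b : ℚ) ^ (2 * h)) * ((p : ℚ) / (q : ℚ)) +
      (a : ℚ) ^ h * (b : ℚ) ^ h * ((p : ℚ) / (q : ℚ)) ^ 2) :
    IsSquare (a ^ h * b ^ h * (a ^ h * q + b ^ h * p) * (a ^ h * p + b ^ h * q)) :=
  stmt_4_general a b p q h hq hp y hy
end

section
/- Let a, b be positive integers, h ≥ 1, A = a^{2h} + b^{2h}, B = a^{2h}b^{2h}. Let (x₁, y₁) be a rational point on y² = x³ + A x² + B x with y₁ ≠ 0, and define x₀ = a^h b^h · 4(x₁³ + A x₁² + B x₁) / (x₁² − B)². Writing x₀ = p/q with q = (x₁² − B)² and p = a^h b^h · (2y₁)², then a^h(a^h q + b^h p) = (a^h(x₁² + 2b^{2h}x₁ + B))² and b^h(a^h p + b^h q) = (b^h(x₁² + 2a^{2h}x₁ + B))², so both a^h(a^h q + b^h p) and b^h(a^h p + b^h q) are rational squares. -/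
theorem stmt_5 (a b : ℤ) (h : ℕ) (ha : 0 < a) (hb : 0 < b) (hh : 1 ≤ h)
    (x₁ y₁ : ℚ) (hy : y₁ ≠ 0)
    (A : ℚ) (hA : A = (a : ℚ) ^ (2 * h) + (b : ℚ) ^ (2 * h))
    (B : ℚ) (hB : B = (a : ℚ) ^ (2 * h) * (b : ℚ) ^ (2 * h))
    (hcurve : y₁ ^ 2 = x₁ ^ 3 + A * x₁ ^ 2 + B * x₁)
    (p q : ℚ) (hp : p = (a : ℚ) ^ h * (b : ℚ) ^ h * (2 * y₁) ^ 2)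
    (hq : q = (x₁ ^ 2 - B) ^ 2)
    (x₀ : ℚ)
    (hx₀ : x₀ = (a : ℚ) ^ h * (b : ℚ) ^ h * (4 * (x₁ ^ 3 + A * x₁ ^ 2 + B * x₁)) /
      (x₁ ^ 2 - B) ^ 2) :
    x₀ = p / q ∧
    (a : ℚ) ^ h * ((a : ℚ) ^ h * q + (b : ℚ) ^ h * p) =
      ((a : ℚ) ^ h * (x₁ ^ 2 + 2 * (b : ℚ) ^ (2 * h) * x₁ + B)) ^ 2 ∧
    (b : ℚ) ^ h * ((a : ℚ) ^ h * p + (b : ℚ) ^ h * q) =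
      ((b : ℚ) ^ h * (x₁ ^ 2 + 2 * (a : ℚ) ^ (2 * h) * x₁ + B)) ^ 2 := by
  subst hA hB hp hq hx₀
  have h2a : (a : ℚ) ^ (2 * h) = (a : ℚ) ^ h * (a : ℚ) ^ h := by
    rw [two_mul, pow_add]
  have h2b : (b : ℚ) ^ (2 * h) = (b : ℚ) ^ h * (b : ℚ) ^ h := by
    rw [two_mul, pow_add]
  rw [h2a, h2b] at hcurve ⊢
  refine ⟨by rw [← hcurve]; ring, ?_, ?_⟩
  · linear_combination (4 * (a:ℚ)^h * (a:ℚ)^h * (b:ℚ)^h * (b:ℚ)^h) * hcurve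
  · linear_combination (4 * (a:ℚ)^h * (a:ℚ)^h * (b:ℚ)^h * (b:ℚ)^h) * hcurve
end

section
/- Let a, b be positive integers and h ≥ 1. Suppose r, s are positive integers with r > s, and set k = r² − s², l = 2rs. If (a^h k)² + (b^h l)² is a perfect square, then x₂ = b^{2h} l² / k² is the square of a rational number and the point (x₂, y) lies on the curve y² = x³ + (a^{2h}+b^{2h})x² + a^{2h}b^{2h}x for some rational y. -/
/-! With `A = a ^ h`, `B = b ^ h` the curve is `y² = x (x + A²) (x + B²)`, so it suffices that
`x = (B l / k)²`, `x + A²` and `x + B²` are all rational squares. Dividing the Pythagorean relations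
`(A k)² + (B l)² = c²` and `k² + l² = (r² + s²)²` by `k²` gives `x + A² = (c / k)²` and
`x + B² = (B (r² + s²) / k)²`. -/

theorem exists_sq_eq_cubic_of_isSquare_add {R : Type*} [CommSemiring R] {x α β : R}
    (hx : IsSquare x) (hα : IsSquare (x + α)) (hβ : IsSquare (x + β)) :
    ∃ y, y ^ 2 = x ^ 3 + (α + β) * x ^ 2 + α * β * x := by
  obtain ⟨y, hy⟩ := (hx.mul hα).mul hβ
  exact ⟨y, by rw [sq, ← hy]; ring⟩

theorem div_sq_add_sq_eq_div_sq {K : Type*} [Field K] {p q u c : K} (hq : q ≠ 0)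
    (h : u ^ 2 * q ^ 2 + p ^ 2 = c ^ 2) : (p / q) ^ 2 + u ^ 2 = (c / q) ^ 2 := by
  field_simp
  linear_combination h

theorem stmt_6_general (a b r s : ℤ) (h : ℕ)
    (hs : 0 < s) (hrs : s < r)
    (k l : ℤ) (hk : k = r ^ 2 - s ^ 2) (hl : l = 2 * r * s)
    (hpyth : IsSquare ((a ^ h * k) ^ 2 + (b ^ h * l) ^ 2)) :
    (∃ t : ℚ, ((b : ℚ) ^ (2 * h) * (l : ℚ) ^ 2 / (k : ℚ) ^ 2) = t ^ 2) ∧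
    (∃ y : ℚ,
      y ^ 2 = ((b : ℚ) ^ (2 * h) * (l : ℚ) ^ 2 / (k : ℚ) ^ 2) ^ 3 +
        ((a : ℚ) ^ (2 * h) + (b : ℚ) ^ (2 * h)) *
          ((b : ℚ) ^ (2 * h) * (l : ℚ) ^ 2 / (k : ℚ) ^ 2) ^ 2 +
        (a : ℚ) ^ (2 * h) * (b : ℚ) ^ (2 * h) *
          ((b : ℚ) ^ (2 * h) * (l : ℚ) ^ 2 / (k : ℚ) ^ 2)) := by
  obtain ⟨c, hc⟩ := hpyth
  have hk0 : (k : ℚ) ≠ 0 := by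
    have : 0 < k := by nlinarith
    exact_mod_cast this.ne'
  have hx : (b : ℚ) ^ (2 * h) * (l : ℚ) ^ 2 / (k : ℚ) ^ 2 = ((b : ℚ) ^ h * l / k) ^ 2 := by
    rw [div_pow, mul_pow, ← pow_mul, mul_comm h]
  have hA : ((a : ℚ) ^ h) ^ 2 * k ^ 2 + ((b : ℚ) ^ h * l) ^ 2 = c ^ 2 := by
    rw [← mul_pow]
    exact_mod_cast hc.trans (sq c).symm
  have hB : ((b : ℚ) ^ h) ^ 2 * k ^ 2 + ((b : ℚ) ^ h * l) ^ 2 =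
      ((b : ℚ) ^ h * (r ^ 2 + s ^ 2)) ^ 2 := by
    subst hk hl; push_cast; ring
  rw [hx, mul_comm 2 h, pow_mul, pow_mul]
  refine ⟨⟨_, rfl⟩, exists_sq_eq_cubic_of_isSquare_add (IsSquare.sq _) ?_ ?_⟩
  · rw [div_sq_add_sq_eq_div_sq hk0 hA]
    exact IsSquare.sq _
  · rw [div_sq_add_sq_eq_div_sq hk0 hB]
    exact IsSquare.sq _

theorem stmt_6 (a b r s : ℤ) (h : ℕ) (ha : 0 < a) (hb : 0 < b) (hh : 1 ≤ h)
    (hs : 0 < s) (hrs : s < r)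
    (k l : ℤ) (hk : k = r ^ 2 - s ^ 2) (hl : l = 2 * r * s)
    (hpyth : IsSquare ((a ^ h * k) ^ 2 + (b ^ h * l) ^ 2)) :
    (∃ t : ℚ, ((b : ℚ) ^ (2 * h) * (l : ℚ) ^ 2 / (k : ℚ) ^ 2) = t ^ 2) ∧
    (∃ y : ℚ,
      y ^ 2 = ((b : ℚ) ^ (2 * h) * (l : ℚ) ^ 2 / (k : ℚ) ^ 2) ^ 3 +
        ((a : ℚ) ^ (2 * h) + (b : ℚ) ^ (2 * h)) *
          ((b : ℚ) ^ (2 * h) * (l : ℚ) ^ 2 / (k : ℚ) ^ 2) ^ 2 +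
        (a : ℚ) ^ (2 * h) * (b : ℚ) ^ (2 * h) *
          ((b : ℚ) ^ (2 * h) * (l : ℚ) ^ 2 / (k : ℚ) ^ 2)) :=
  stmt_6_general a b r s h hs hrs k l hk hl hpyth
end

section
/- Let a = m² − n² and b = 2mn for positive integers m > n. If ab is a perfect square, then there exists a rational point (x,y) with y ≠ 0 on the curve y² = x³ − x; consequently (since the congruent-number curve y² = x³ − x has only the rational points with y = 0), ab is never a perfect square. -/
/-!
If `m, n` are coprime of opposite parity, the factors `m + n`, `m - n` and `2mn` of
`ab = (m + n)(m - n) · 2mn` are pairwise coprime, so a square `ab` forces `m + n = p²`,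
`m - n = q²`, `2mn = r²` with `p, q` odd, hence `p⁴ - q⁴ = 2r²`. Then
`(p² - q²) · (p² + q²)/2 = r²` with coprime factors gives `p² - q² = w²` and
`p² + q² = 2u²`.
The primitive triple `(q, w, p)` is `(M² - N², 2MN, M² + N²)`, and `p² + q² = 2(M⁴ + N⁴)`
turns the second equation into `M⁴ + N⁴ = u²`, impossible by Fermat.
The general case reduces to this one since `ab` is homogeneous of degree 4 in `(m, n)`, and
`(m, n) ↦ ((m + n)/2, (m - n)/2)` only divides it by `4` when `m, n` are both odd.
-/

theorem IsSquare.of_sq_mul {R : Type*} [CommRing R] [IsDomain R] [IsIntegrallyClosed R]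
    {c x : R} (hc : c ≠ 0) (h : IsSquare (c ^ 2 * x)) : IsSquare x := by
  obtain ⟨s, hs⟩ := h
  obtain ⟨t, rfl⟩ : c ∣ s :=
    (IsIntegrallyClosed.pow_dvd_pow_iff two_ne_zero).mp ⟨x, by rw [hs, pow_two]⟩
  exact ⟨t, mul_left_cancel₀ (pow_ne_zero 2 hc) (by rw [hs]; ring)⟩

theorem Int.exists_pos_sq_of_isCoprime {a b c : ℤ} (h : IsCoprime a b) (heq : a * b = c ^ 2)
    (ha : 0 < a) : ∃ d, 0 < d ∧ a = d ^ 2 := by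
  obtain ⟨d, hd | hd⟩ := Int.sq_of_isCoprime h heq
  · exact ⟨|d|, abs_pos.mpr (by rintro rfl; simp [hd] at ha), by rw [sq_abs, hd]⟩
  · nlinarith [sq_nonneg d]

theorem PythagoreanTriple.sq_add_sq_ne_two_mul_sq {x y z : ℤ} (h : PythagoreanTriple x y z)
    (hc : Int.gcd x y = 1) (hx : x % 2 = 1) (hz : 0 < z) (hy : y ≠ 0) (u : ℤ) :
    z ^ 2 + x ^ 2 ≠ 2 * u ^ 2 := by
  obtain ⟨m, n, rfl, rfl, rfl, -⟩ := h.coprime_classification' hc hx hz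
  have hm : m ≠ 0 := by rintro rfl; simp at hy
  have hn : n ≠ 0 := by rintro rfl; simp at hy
  intro heq
  exact not_fermat_42 hm hn (c := u) (by linarith)

theorem Int.pow_four_sub_pow_four_ne_two_mul_sq {p q : ℤ} (hp : Odd p) (hq : Odd q)
    (hpq : IsCoprime p q) (hq0 : 0 < q) (hqp : q < p) (r : ℤ) :
    p ^ 4 - q ^ 4 ≠ 2 * r ^ 2 := by
  intro heq
  obtain ⟨B, hB⟩ : Even (p ^ 2 + q ^ 2) := hp.pow.add_odd hq.pow
  have hB_odd : Odd B := by
    have := Int.sq_mod_four_eq_one_of_odd hp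
    have := Int.sq_mod_four_eq_one_of_odd hq
    rw [Int.odd_iff]
    omega
  have hBp : IsCoprime B (p ^ 2) := by
    have : IsCoprime (2 * B) (p ^ 2) := by
      rw [two_mul, ← hB]
      simpa using hpq.symm.pow.mul_add_left_left 1
    exact this.of_mul_left_right
  have hBD : IsCoprime B (p ^ 2 - q ^ 2) := by
    have := ((Int.isCoprime_two_right.mpr hB_odd).mul_right hBp).add_mul_left_right (-2)
    rwa [show 2 * p ^ 2 + B * -2 = p ^ 2 - q ^ 2 by linear_combination hB] at this
  have hDB : (p ^ 2 - q ^ 2) * B = r ^ 2 :=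
    mul_left_cancel₀ two_ne_zero (by linear_combination heq - (p ^ 2 - q ^ 2) * hB)
  obtain ⟨w, hw0, hw⟩ := Int.exists_pos_sq_of_isCoprime hBD.symm hDB (by nlinarith)
  obtain ⟨u, -, hu⟩ := Int.exists_pos_sq_of_isCoprime hBD (by rw [mul_comm, hDB])
    (by nlinarith)
  have hqw : IsCoprime q w := by
    rw [← IsCoprime.pow_right_iff two_pos, ← hw]
    have := hpq.symm.pow_right (n := 2) |>.add_mul_left_right (-q)
    rwa [show p ^ 2 + q * -q = p ^ 2 - q ^ 2 by ring] at this
  have hqwp : PythagoreanTriple q w p := by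
    unfold PythagoreanTriple
    linear_combination -hw
  exact hqwp.sq_add_sq_ne_two_mul_sq (Int.isCoprime_iff_gcd_eq_one.mp hqw)
    (Int.odd_iff.mp hq) (by linarith) hw0.ne' u (by linear_combination hB + 2 * hu)

def legProduct (m n : ℤ) : ℤ := (m ^ 2 - n ^ 2) * (2 * m * n)

theorem legProduct_mul_mul (g m n : ℤ) :
    legProduct (m * g) (n * g) = (g ^ 2) ^ 2 * legProduct m n := by
  unfold legProduct
  ring

theorem legProduct_add_sub (p q : ℤ) : legProduct (p + q) (p - q) = 2 ^ 2 * legProduct p q := by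
  unfold legProduct
  ring

theorem Int.isCoprime_add_two_mul_mul {m n : ℤ} (hmn : IsCoprime m n) (hodd : Odd (m + n)) :
    IsCoprime (m + n) (2 * m * n) :=
  ((Int.isCoprime_two_right.mpr hodd).mul_right
    (by simpa using hmn.symm.mul_add_left_left 1)).mul_right
    (by simpa using hmn.add_mul_left_left 1)

theorem not_isSquare_legProduct_of_odd_add {m n : ℤ} (hmn : IsCoprime m n) (hodd : Odd (m + n))
    (hn : 0 < n) (hnm : n < m) : ¬ IsSquare (legProduct m n) := by
  rintro ⟨s, hs⟩
  have hodd' : Odd (m - n) := by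
    have := hodd.sub_even (even_two_mul n)
    rwa [show m + n - 2 * n = m - n by ring] at this
  have hsum_diff : IsCoprime (m + n) (m - n) := by
    have := ((Int.isCoprime_two_right.mpr hodd).mul_right
      (by simpa using hmn.symm.mul_add_left_left 1)).add_mul_left_right (-1)
    rwa [show 2 * m + (m + n) * -1 = m - n by ring] at this
  have hcop : IsCoprime ((m + n) * (m - n)) (2 * m * n) := by
    refine (Int.isCoprime_add_two_mul_mul hmn hodd).mul_left ?_
    simpa [← sub_eq_add_neg, IsCoprime.neg_right_iff] using
      Int.isCoprime_add_two_mul_mul hmn.neg_right (by rwa [← sub_eq_add_neg])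
  have hprod : (m + n) * (m - n) * (2 * m * n) = s ^ 2 := by
    unfold legProduct at hs
    linear_combination hs
  obtain ⟨e, -, he⟩ := Int.exists_pos_sq_of_isCoprime hcop hprod (by nlinarith)
  obtain ⟨r, -, hr⟩ := Int.exists_pos_sq_of_isCoprime hcop.symm (c := s)
    (by linear_combination hprod) (by nlinarith)
  obtain ⟨p, hp0, hp⟩ := Int.exists_pos_sq_of_isCoprime hsum_diff he (by linarith)
  obtain ⟨q, hq0, hq⟩ := Int.exists_pos_sq_of_isCoprime hsum_diff.symm (c := e)
    (by linear_combination he) (by linarith)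
  have hp_odd : Odd p := (Int.odd_pow.mp (hp ▸ hodd)).resolve_right two_ne_zero
  have hq_odd : Odd q := (Int.odd_pow.mp (hq ▸ hodd')).resolve_right two_ne_zero
  have hpq : IsCoprime p q := (IsCoprime.pow_iff two_pos two_pos).mp (hp ▸ hq ▸ hsum_diff)
  exact Int.pow_four_sub_pow_four_ne_two_mul_sq hp_odd hq_odd hpq hq0 (by nlinarith) r
    (by linear_combination (-(m + n + p ^ 2)) * hp + (m - n + q ^ 2) * hq + 2 * hr)

theorem not_isSquare_legProduct_of_isCoprime {m n : ℤ} (hmn : IsCoprime m n) (hn : 0 < n)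
    (hnm : n < m) : ¬ IsSquare (legProduct m n) := by
  rcases Int.even_or_odd (m + n) with hev | hodd
  · obtain ⟨p, q, rfl, rfl⟩ : ∃ p q, m = p + q ∧ n = p - q := by
      obtain ⟨p, hp⟩ := hev
      exact ⟨p, p - n, by omega, by omega⟩
    have hodd : Odd (p + q) := by
      rw [Int.odd_iff]
      by_contra h
      rw [Int.even_iff] at hev
      have h2 := hmn.isUnit_of_dvd' (x := 2) (by omega) (by omega)
      norm_num [Int.isUnit_iff] at h2
    have hpq : IsCoprime p q := by
      obtain ⟨u, v, huv⟩ := hmn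
      exact ⟨u + v, u - v, by linear_combination huv⟩
    rw [legProduct_add_sub]
    exact fun h ↦ not_isSquare_legProduct_of_odd_add hpq hodd (by omega) (by omega)
      (h.of_sq_mul two_ne_zero)
  · exact not_isSquare_legProduct_of_odd_add hmn hodd hn hnm

theorem not_isSquare_legProduct {m n : ℤ} (hn : 0 < n) (hnm : n < m) :
    ¬ IsSquare (legProduct m n) := by
  obtain ⟨g, m', n', hg, hgcd, rfl, rfl⟩ :=
    Int.exists_gcd_one' (Int.gcd_pos_of_ne_zero_right m hn.ne')
  have hg' : (0 : ℤ) < g := by exact_mod_cast hg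
  rw [legProduct_mul_mul]
  exact fun h ↦ not_isSquare_legProduct_of_isCoprime (Int.isCoprime_iff_gcd_eq_one.mpr hgcd)
    (pos_of_mul_pos_left hn hg'.le) (lt_of_mul_lt_mul_right hnm hg'.le)
    (h.of_sq_mul (by positivity))

theorem stmt_8 (m n a b : ℤ) (hn : 0 < n) (hmn : n < m)
    (ha : a = m ^ 2 - n ^ 2) (hb : b = 2 * m * n) :
    (IsSquare (a * b) → ∃ x y : ℚ, y ≠ 0 ∧ y ^ 2 = x ^ 3 - x) ∧
    ¬ IsSquare (a * b) := by
  have key : ¬ IsSquare (a * b) := by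
    subst ha hb
    exact not_isSquare_legProduct hn hmn
  exact ⟨fun h ↦ absurd h key, key⟩
end

section
/- For positive integers m > n, with a = m² − n², b = 2mn, k = 4mn(m² + n²), and l = (m − n)²(m + n)², one has the identity (a³k)² + (b³l)² = (4mn(m⁴ + n⁴)(m − n)²(m + n)²)². -/
theorem stmt_10_general (m n a b k l : ℤ)
    (ha : a = m ^ 2 - n ^ 2) (hb : b = 2 * m * n)
    (hk : k = 4 * m * n * (m ^ 2 + n ^ 2)) (hl : l = (m - n) ^ 2 * (m + n) ^ 2) :
    (a ^ 3 * k) ^ 2 + (b ^ 3 * l) ^ 2 =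
      (4 * m * n * (m ^ 4 + n ^ 4) * (m - n) ^ 2 * (m + n) ^ 2) ^ 2 := by
  subst ha hb hk hl
  ring

theorem stmt_10 (m n a b k l : ℤ) (hn : 0 < n) (hmn : n < m)
    (ha : a = m ^ 2 - n ^ 2) (hb : b = 2 * m * n)
    (hk : k = 4 * m * n * (m ^ 2 + n ^ 2)) (hl : l = (m - n) ^ 2 * (m + n) ^ 2) :
    (a ^ 3 * k) ^ 2 + (b ^ 3 * l) ^ 2 =
      (4 * m * n * (m ^ 4 + n ^ 4) * (m - n) ^ 2 * (m + n) ^ 2) ^ 2 :=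
  stmt_10_general m n a b k l ha hb hk hl
end

section
/- For all positive integers m > n, the point P = (−16(m²−n²)²m⁴n⁴, 16(m²−n²)²m⁴n⁴(m²+n²)(m⁴−6m²n²+n⁴)) lies on the curve y² = x³ + (a⁶ + b⁶)x² + a⁶b⁶x, where a = m² − n² and b = 2mn. -/
theorem stmt_12 (m n a b : ℤ) (hn : 0 < n) (hmn : n < m)
    (ha : a = m ^ 2 - n ^ 2) (hb : b = 2 * m * n) :
    (16 * (m ^ 2 - n ^ 2) ^ 2 * m ^ 4 * n ^ 4 * (m ^ 2 + n ^ 2) *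
        (m ^ 4 - 6 * m ^ 2 * n ^ 2 + n ^ 4)) ^ 2 =
      (-(16 * (m ^ 2 - n ^ 2) ^ 2 * m ^ 4 * n ^ 4)) ^ 3 +
        (a ^ 6 + b ^ 6) * (-(16 * (m ^ 2 - n ^ 2) ^ 2 * m ^ 4 * n ^ 4)) ^ 2 +
        a ^ 6 * b ^ 6 * (-(16 * (m ^ 2 - n ^ 2) ^ 2 * m ^ 4 * n ^ 4)) := by
  subst ha hb; ring
end

section
/- Let m > n be positive integers with a = m² − n², b = 2mn. If 5m² − n² is a perfect square, then the point with x-coordinate n²(m²−n²) lies on the curve Γ_{a,b}: y² = x³ + (a²+b²)x² + a²b²x for some rational y; that is, n²(m²−n²)·((n²(m²−n²))² + (a²+b²)(n²(m²−n²)) + a²b²) is a rational square. -/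
theorem stmt_13 (m n a b : ℤ) (hn : 0 < n) (hmn : n < m)
    (ha : a = m ^ 2 - n ^ 2) (hb : b = 2 * m * n)
    (hsq : IsSquare (5 * m ^ 2 - n ^ 2)) :
    ∃ y : ℚ,
      y ^ 2 = ((n ^ 2 * (m ^ 2 - n ^ 2) : ℤ) : ℚ) ^ 3 +
        ((a ^ 2 + b ^ 2 : ℤ) : ℚ) * ((n ^ 2 * (m ^ 2 - n ^ 2) : ℤ) : ℚ) ^ 2 +
        ((a ^ 2 * b ^ 2 : ℤ) : ℚ) * ((n ^ 2 * (m ^ 2 - n ^ 2) : ℤ) : ℚ) := by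
  obtain ⟨r, hr⟩ := hsq
  subst ha hb
  refine ⟨((m * n ^ 2 * (m ^ 2 - n ^ 2) * r : ℤ) : ℚ), ?_⟩
  have hr' : (5 * (m:ℚ) ^ 2 - n ^ 2) = r * r := by exact_mod_cast hr
  push_cast
  linear_combination -((m:ℚ) * n ^ 2 * (m ^ 2 - n ^ 2)) ^ 2 * hr'
end

section
/- Let m > n be positive integers with a = m² − n², b = 2mn. If m² + 3mn + n² is a perfect square, then mn(m−n)² · ((mn(m−n)²)² + (a²+b²)·mn(m−n)² + a²b²) is a perfect square, i.e., the curve y² = x³ + (a²+b²)x² + a²b²x has a rational point with x-coordinate mn(m−n)². -/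
/- With x = mn(m-n)², the cubic factors as x(x + a²)(x + b²), where
x + a² = (m-n)²(m² + 3mn + n²) and x + b² = mn(m+n)²; so the value is
(mn(m-n)²(m+n))² · (m² + 3mn + n²). -/
theorem stmt_14_general (m n a b : ℤ)
    (ha : a = m ^ 2 - n ^ 2) (hb : b = 2 * m * n)
    (hsq : IsSquare (m ^ 2 + 3 * m * n + n ^ 2)) :
    IsSquare (m * n * (m - n) ^ 2 *
      ((m * n * (m - n) ^ 2) ^ 2 + (a ^ 2 + b ^ 2) * (m * n * (m - n) ^ 2) +
        a ^ 2 * b ^ 2)) := by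
  subst ha hb
  have factored : m * n * (m - n) ^ 2 *
      ((m * n * (m - n) ^ 2) ^ 2 + ((m ^ 2 - n ^ 2) ^ 2 + (2 * m * n) ^ 2) *
        (m * n * (m - n) ^ 2) + (m ^ 2 - n ^ 2) ^ 2 * (2 * m * n) ^ 2) =
      (m * n * (m - n) ^ 2 * (m + n)) ^ 2 * (m ^ 2 + 3 * m * n + n ^ 2) := by
    ring
  rw [factored]
  exact (IsSquare.sq _).mul hsq

theorem stmt_14 (m n a b : ℤ) (hn : 0 < n) (hmn : n < m)
    (ha : a = m ^ 2 - n ^ 2) (hb : b = 2 * m * n)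
    (hsq : IsSquare (m ^ 2 + 3 * m * n + n ^ 2)) :
    IsSquare (m * n * (m - n) ^ 2 *
      ((m * n * (m - n) ^ 2) ^ 2 + (a ^ 2 + b ^ 2) * (m * n * (m - n) ^ 2) +
        a ^ 2 * b ^ 2)) :=
  stmt_14_general m n a b ha hb hsq
end

section
/- Let m > n be positive integers with a = m² − n², b = 2mn. If m⁴ + 4m²n² − n⁴ is a perfect square, then the curve y² = x³ + (a⁴+b⁴)x² + a⁴b⁴x has a rational point with x-coordinate 8m⁴n²(m²−n²); equivalently, 8m⁴n²(m²−n²) · ((8m⁴n²(m²−n²))² + (a⁴+b⁴)·8m⁴n²(m²−n²) + a⁴b⁴) is a perfect square. -/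
theorem pythagorean_quadratic_factor_eq {R : Type*} [CommRing R] (m n x : R)
    (hx : x = 8 * m ^ 4 * n ^ 2 * (m ^ 2 - n ^ 2)) :
    x ^ 2 + ((m ^ 2 - n ^ 2) ^ 4 + (2 * m * n) ^ 4) * x + (m ^ 2 - n ^ 2) ^ 4 * (2 * m * n) ^ 4 =
      x * ((m ^ 2 + n ^ 2) ^ 2 * (m ^ 4 + 4 * m ^ 2 * n ^ 2 - n ^ 4)) := by
  subst hx
  ring

theorem stmt_15_general (m n a b : ℤ)
    (ha : a = m ^ 2 - n ^ 2) (hb : b = 2 * m * n)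
    (hsq : IsSquare (m ^ 4 + 4 * m ^ 2 * n ^ 2 - n ^ 4)) :
    IsSquare (8 * m ^ 4 * n ^ 2 * (m ^ 2 - n ^ 2) *
      ((8 * m ^ 4 * n ^ 2 * (m ^ 2 - n ^ 2)) ^ 2 +
        (a ^ 4 + b ^ 4) * (8 * m ^ 4 * n ^ 2 * (m ^ 2 - n ^ 2)) +
        a ^ 4 * b ^ 4)) := by
  subst ha hb
  rw [pythagorean_quadratic_factor_eq m n _ rfl, ← mul_assoc]
  exact (IsSquare.mul_self _).mul ((IsSquare.sq _).mul hsq)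

theorem stmt_15 (m n a b : ℤ) (hn : 0 < n) (hmn : n < m)
    (ha : a = m ^ 2 - n ^ 2) (hb : b = 2 * m * n)
    (hsq : IsSquare (m ^ 4 + 4 * m ^ 2 * n ^ 2 - n ^ 4)) :
    IsSquare (8 * m ^ 4 * n ^ 2 * (m ^ 2 - n ^ 2) *
      ((8 * m ^ 4 * n ^ 2 * (m ^ 2 - n ^ 2)) ^ 2 +
        (a ^ 4 + b ^ 4) * (8 * m ^ 4 * n ^ 2 * (m ^ 2 - n ^ 2)) +
        a ^ 4 * b ^ 4)) :=
  stmt_15_general m n a b ha hb hsq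
end
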